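/- arXiv:1210.3059 — 2 statements merged into one kernel-verified Lean document; each statement's English description precedes it below -/
import Mathlib

section
/- Let v be an infinite place, i.e., |T| > 1 for every non-constant T ∈ A, and let φ be a Drinfeld module over C_v normalized so that all non-linear coefficients of φ_T(x) are integral. Then the connected component of the identity in the Berkovich filled Julia set of φ is the single point {0}. -/
/-- The filled Julia set of the `A`-action given by the polynomials `φ a`. -/
def filledJulia {A Cv : Type*} [Norm Cv] [Semiring Cv] (φ : A → Polynomial Cv) : Set Cv :=
  {x | ∃ B : ℝ, ∀ a : A, ‖(φ a).eval x‖ ≤ B}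

open Polynomial in
private lemma aux_coeff_one_comp {Cv : Type*} [Field Cv] (p q : Polynomial Cv)
    (hq : q.coeff 0 = 0) : (p.comp q).coeff 1 = p.coeff 1 * q.coeff 1 := by
  have e : ∀ u : Polynomial Cv, u.derivative.eval 0 = u.coeff 1 := by
    intro u
    rw [← Polynomial.coeff_zero_eq_eval_zero, Polynomial.coeff_derivative]
    simp
  have hq0 : q.eval 0 = 0 := by rw [← Polynomial.coeff_zero_eq_eval_zero, hq]
  calc (p.comp q).coeff 1 = (p.comp q).derivative.eval 0 := (e _).symm
    _ = p.coeff 1 * q.coeff 1 := by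
        rw [Polynomial.derivative_comp, Polynomial.eval_mul, Polynomial.eval_comp, hq0, e, e,
          mul_comm]

private lemma aux_multiset_min {α : Type*} (f : α → ℝ) (s : Multiset α) (hs : s ≠ 0) :
    ∃ b ∈ s, ∀ r ∈ s, f b ≤ f r := by
  induction s using Multiset.induction_on with
  | empty => exact absurd rfl hs
  | cons a t ih =>
    by_cases ht : t = 0
    · subst ht
      exact ⟨a, Multiset.mem_cons_self _ _, by
        intro r hr
        rcases Multiset.mem_cons.mp hr with rfl | hr
        · exact le_rfl
        · simp at hr⟩
    · obtain ⟨b, hb, hmin⟩ := ih ht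
      rcases le_total (f a) (f b) with h | h
      · refine ⟨a, Multiset.mem_cons_self _ _, fun r hr => ?_⟩
        rcases Multiset.mem_cons.mp hr with rfl | hr
        · exact le_rfl
        · exact h.trans (hmin r hr)
      · refine ⟨b, Multiset.mem_cons_of_mem hb, fun r hr => ?_⟩
        rcases Multiset.mem_cons.mp hr with rfl | hr
        · exact h
        · exact hmin r hr

open Polynomial in
private lemma aux_norm_sub_le_max {Cv : Type*} [NormedField Cv] [IsUltrametricDist Cv]
    (x y : Cv) : ‖x - y‖ ≤ max ‖x‖ ‖y‖ := by
  rw [sub_eq_add_neg]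
  simpa using IsUltrametricDist.norm_add_le_max x (-y)

open Polynomial in
private lemma aux_coeff_prod_bound {Cv : Type*} [NormedField Cv] [IsUltrametricDist Cv]
    (m : ℝ) (hm : 0 < m) (s : Multiset Cv) (hs : ∀ r ∈ s, m ≤ ‖r‖) :
    ‖((s.map fun a => X - C a).prod).coeff 0‖ = (s.map norm).prod ∧
    m * ‖((s.map fun a => X - C a).prod).coeff 1‖ ≤ (s.map norm).prod := by
  induction s using Multiset.induction_on with
  | empty => simp [Polynomial.coeff_one]
  | cons a t ih =>
    have ha : m ≤ ‖a‖ := hs a (Multiset.mem_cons_self _ _)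
    obtain ⟨h0, h1⟩ := ih fun r hr => hs r (Multiset.mem_cons_of_mem hr)
    set Q := (t.map fun a => X - C a).prod with hQ
    have hprod : ((a ::ₘ t).map fun a => X - C a).prod = (X - C a) * Q := by
      rw [Multiset.map_cons, Multiset.prod_cons]
    have htprod : ((a ::ₘ t).map norm).prod = ‖a‖ * (t.map norm).prod := by
      rw [Multiset.map_cons, Multiset.prod_cons]
    have hc0 : ((X - C a) * Q).coeff 0 = (-a) * Q.coeff 0 := by
      rw [Polynomial.mul_coeff_zero]
      simp
    have hc1 : ((X - C a) * Q).coeff 1 = Q.coeff 0 - a * Q.coeff 1 := by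
      rw [sub_mul, Polynomial.coeff_sub, Polynomial.coeff_C_mul]
      congr 1
      exact Polynomial.coeff_X_mul Q 0
    have hQ0nonneg : (0:ℝ) ≤ (t.map norm).prod := h0 ▸ norm_nonneg _
    constructor
    · rw [hprod, hc0, htprod, norm_mul, norm_neg, h0]
    · rw [hprod, hc1, htprod]
      have hmax : ‖Q.coeff 0 - a * Q.coeff 1‖ ≤ max ‖Q.coeff 0‖ ‖a * Q.coeff 1‖ :=
        aux_norm_sub_le_max _ _
      have : m * ‖Q.coeff 0 - a * Q.coeff 1‖ ≤ m * max ‖Q.coeff 0‖ ‖a * Q.coeff 1‖ :=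
        mul_le_mul_of_nonneg_left hmax hm.le
      refine this.trans ?_
      rcases max_cases ‖Q.coeff 0‖ ‖a * Q.coeff 1‖ with ⟨he, _⟩ | ⟨he, _⟩ <;> rw [he]
      · rw [h0]
        exact mul_le_mul_of_nonneg_right ha hQ0nonneg
      · rw [norm_mul, ← mul_assoc, mul_comm m ‖a‖, mul_assoc]
        exact mul_le_mul_of_nonneg_left h1 (norm_nonneg a)

open Polynomial in
private lemma aux_exists_root_norm_le {Cv : Type*} [NormedField Cv] [IsUltrametricDist Cv]
    [IsAlgClosed Cv] (P : Polynomial Cv) (h1 : P.coeff 1 ≠ 0) :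
    ∃ β : Cv, P.eval β = 0 ∧ ‖β‖ ≤ ‖P.coeff 0‖ / ‖P.coeff 1‖ := by
  have hP : P ≠ 0 := fun h => h1 (by simp [h])
  have hfac := (IsAlgClosed.splits P).eq_prod_roots
  set s := P.roots with hsdef
  have hs0 : s ≠ 0 := by
    intro h
    rw [h] at hfac
    apply h1
    rw [hfac]
    simp
  by_cases hz : (0 : Cv) ∈ s
  · exact ⟨0, Polynomial.isRoot_of_mem_roots hz, by
      simpa using div_nonneg (norm_nonneg _) (norm_nonneg _)⟩
  obtain ⟨β, hβ, hmin⟩ := aux_multiset_min norm s hs0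
  have hβ0 : β ≠ 0 := fun h => hz (h ▸ hβ)
  have hm : 0 < ‖β‖ := norm_pos_iff.mpr hβ0
  obtain ⟨h0, h1'⟩ := aux_coeff_prod_bound ‖β‖ hm s hmin
  have e0 : ‖P.coeff 0‖ = ‖P.leadingCoeff‖ * (s.map norm).prod := by
    conv_lhs => rw [hfac]
    rw [Polynomial.coeff_C_mul, norm_mul, h0]
  have e1 : ‖P.coeff 1‖ = ‖P.leadingCoeff‖ *
      ‖((s.map fun a => X - C a).prod).coeff 1‖ := by
    conv_lhs => rw [hfac]
    rw [Polynomial.coeff_C_mul, norm_mul]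
  refine ⟨β, Polynomial.isRoot_of_mem_roots hβ, ?_⟩
  rw [le_div_iff₀ (norm_pos_iff.mpr h1)]
  rw [e1, e0, ← mul_assoc, mul_comm ‖β‖ ‖P.leadingCoeff‖, mul_assoc]
  exact mul_le_mul_of_nonneg_left h1' (norm_nonneg _)

open Polynomial in
private lemma aux_escape {Cv : Type*} [NormedField Cv] [IsUltrametricDist Cv]
    (p : Polynomial Cv) {d : ℕ} (hd : p.natDegree = d) (hd2 : 2 ≤ d) (hp : p ≠ 0) :
    ∃ M : ℝ, 1 ≤ M ∧ ∀ y : Cv, M ≤ ‖y‖ → 2 * ‖y‖ ≤ ‖p.eval y‖ := by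
  have hl : (0:ℝ) < ‖p.leadingCoeff‖ := norm_pos_iff.mpr (Polynomial.leadingCoeff_ne_zero.mpr hp)
  set Cb : ℝ := ∑ i ∈ Finset.range d, ‖p.coeff i‖ with hCb
  have hCb0 : 0 ≤ Cb := Finset.sum_nonneg fun _ _ => norm_nonneg _
  refine ⟨max 1 ((Cb + 2) / ‖p.leadingCoeff‖), le_max_left _ _, fun y hy => ?_⟩
  have hy1 : (1:ℝ) ≤ ‖y‖ := (le_max_left _ _).trans hy
  have hy0 : (0:ℝ) < ‖y‖ := lt_of_lt_of_le one_pos hy1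
  have hyC : Cb + 2 ≤ ‖p.leadingCoeff‖ * ‖y‖ := by
    rw [← div_le_iff₀' hl]
    exact (le_max_right _ _).trans hy
  set S : Cv := ∑ i ∈ Finset.range d, p.coeff i * y ^ i with hSdef
  have heval : p.eval y = S + p.leadingCoeff * y ^ d := by
    rw [Polynomial.eval_eq_sum_range, hd, Finset.sum_range_succ, ← hd,
      Polynomial.coeff_natDegree, hd]
  have hSle : ‖S‖ ≤ Cb * ‖y‖ ^ (d - 1) := by
    refine (norm_sum_le _ _).trans ?_
    rw [hCb, Finset.sum_mul]
    refine Finset.sum_le_sum fun i hi => ?_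
    rw [norm_mul, norm_pow]
    refine mul_le_mul_of_nonneg_left ?_ (norm_nonneg _)
    exact pow_le_pow_right₀ hy1 (Nat.le_sub_one_of_lt (Finset.mem_range.mp hi))
  have hyd : ‖y‖ ^ d = ‖y‖ * ‖y‖ ^ (d - 1) := by
    rw [← pow_succ']
    congr 1
    omega
  have hLnorm : ‖p.leadingCoeff * y ^ d‖ = ‖p.leadingCoeff‖ * ‖y‖ ^ d := by
    rw [norm_mul, norm_pow]
  have hpowpos : (0:ℝ) < ‖y‖ ^ (d - 1) := pow_pos hy0 _
  have hkey : (Cb + 2) * ‖y‖ ^ (d - 1) ≤ ‖p.leadingCoeff‖ * ‖y‖ ^ d := by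
    rw [hyd, ← mul_assoc]
    exact mul_le_mul_of_nonneg_right hyC hpowpos.le
  have hSlt : ‖S‖ < ‖p.leadingCoeff * y ^ d‖ := by
    rw [hLnorm]
    refine lt_of_le_of_lt hSle (lt_of_lt_of_le ?_ hkey)
    nlinarith
  have hge : ‖p.leadingCoeff * y ^ d‖ ≤ ‖p.eval y‖ := by
    have h1' : ‖p.leadingCoeff * y ^ d‖ ≤ max ‖p.eval y‖ ‖S‖ := by
      have he2 : p.leadingCoeff * y ^ d = p.eval y - S := by rw [heval]; ring
      rw [he2]
      exact aux_norm_sub_le_max _ _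
    rcases max_cases ‖p.eval y‖ ‖S‖ with ⟨he, _⟩ | ⟨he, _⟩
    · rwa [he] at h1'
    · rw [he] at h1'
      linarith
  have h2y : 2 * ‖y‖ ≤ 2 * ‖y‖ ^ (d - 1) := by
    refine mul_le_mul_of_nonneg_left ?_ (by norm_num)
    calc ‖y‖ = ‖y‖ ^ 1 := (pow_one _).symm
      _ ≤ ‖y‖ ^ (d - 1) := pow_le_pow_right₀ hy1 (by omega)
  calc 2 * ‖y‖ ≤ 2 * ‖y‖ ^ (d - 1) := h2y
    _ ≤ (Cb + 2) * ‖y‖ ^ (d - 1) := by nlinarith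
    _ ≤ ‖p.leadingCoeff‖ * ‖y‖ ^ d := hkey
    _ = ‖p.leadingCoeff * y ^ d‖ := hLnorm.symm
    _ ≤ ‖p.eval y‖ := hge

/-- at an infinite place (`|T| > 1` for non-constant `T`, i.e. the
linear coefficient of `φ_T` has norm `> 1`), with all non-linear coefficients of
`φ_T` integral, the connected component of the identity in the Berkovich filled
Julia set is the single point `{0}`: `0` lies in the filled Julia set, but no
closed disk of positive radius around `0` is contained in it. -/
theorem infinite_place_identity_component_trivial
    {A : Type*} [CommRing A]
    {Cv : Type*} [NontriviallyNormedField Cv] [IsUltrametricDist Cv]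
    [CompleteSpace Cv] [IsAlgClosed Cv]
    (φ : A → Polynomial Cv)
    (hone : φ 1 = Polynomial.X)
    (hcomp : ∀ a b, φ (a * b) = (φ a).comp (φ b))
    (hadd : ∀ (a : A) (x y : Cv), (φ a).eval (x + y) = (φ a).eval x + (φ a).eval y)
    (T : A) (q R : ℕ) (hq : 2 ≤ q) (hR : 1 ≤ R)
    (hdeg : (φ T).natDegree = q ^ R)
    (hlin : 1 < ‖(φ T).coeff 1‖)
    (hnonlin : ∀ i : ℕ, 2 ≤ i → ‖(φ T).coeff i‖ ≤ 1) :
    (0 : Cv) ∈ filledJulia φ ∧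
      ∀ r : ℝ, 0 < r → ¬ ({x : Cv | ‖x‖ ≤ r} ⊆ filledJulia φ) := by
  have heval0 : ∀ a : A, (φ a).eval 0 = 0 := by
    intro a
    have h := hadd a 0 0
    rw [add_zero] at h
    exact (left_eq_add.mp h)
  have hcoeff0 : ∀ a : A, (φ a).coeff 0 = 0 := fun a => by
    rw [Polynomial.coeff_zero_eq_eval_zero, heval0]
  constructor
  · exact ⟨0, fun a => by rw [heval0]; simp⟩
  intro r hr hsub
  set c1 : Cv := (φ T).coeff 1 with hc1def
  have hc1 : 1 < ‖c1‖ := hlin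
  have hc10 : c1 ≠ 0 := by
    intro h
    rw [h, norm_zero] at hc1
    linarith
  have hφT0 : φ T ≠ 0 := fun h => hc10 (by rw [hc1def, h]; simp)
  have hevalmul : ∀ (a b : A) (x : Cv), (φ (a * b)).eval x = (φ a).eval ((φ b).eval x) := by
    intro a b x
    rw [hcomp, Polynomial.eval_comp]
  have hcoeff1pow : ∀ N : ℕ, (φ (T ^ N)).coeff 1 = c1 ^ N := by
    intro N
    induction N with
    | zero => rw [pow_zero, hone, pow_zero, Polynomial.coeff_X_one]
    | succ k ih =>
        rw [pow_succ, mul_comm, hcomp, aux_coeff_one_comp _ _ (hcoeff0 _), ih, pow_succ,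
          mul_comm]
  -- escape radius
  have hd2 : 2 ≤ q ^ R := le_trans hq (Nat.le_self_pow (by omega) q)
  obtain ⟨M, hM1, hesc⟩ := aux_escape (φ T) hdeg hd2 hφT0
  -- pick ζ beyond the escape radius
  obtain ⟨ζ, hζ⟩ := NormedField.exists_lt_norm Cv M
  have hζ0 : (0:ℝ) < ‖ζ‖ := lt_of_lt_of_le (lt_of_lt_of_le one_pos hM1) hζ.le
  -- pick N with ‖ζ‖ / ‖c1‖^N ≤ r
  obtain ⟨N, hN⟩ := pow_unbounded_of_one_lt (‖ζ‖ / r) hc1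
  have hpowN : (0:ℝ) < ‖c1‖ ^ N := pow_pos (lt_trans one_pos hc1) N
  have hζr : ‖ζ‖ / ‖c1‖ ^ N ≤ r := by
    rw [div_le_iff₀ hpowN]
    rw [div_lt_iff₀ hr] at hN
    nlinarith
  -- find a small preimage β of ζ under φ_{T^N}
  set Q : Polynomial Cv := φ (T ^ N) - Polynomial.C ζ with hQdef
  have hQ1 : Q.coeff 1 = c1 ^ N := by
    rw [hQdef, Polynomial.coeff_sub, hcoeff1pow, Polynomial.coeff_C]
    simp
  have hQ0 : Q.coeff 0 = -ζ := by
    rw [hQdef, Polynomial.coeff_sub, hcoeff0, Polynomial.coeff_C]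
    simp
  obtain ⟨β, hβroot, hβle⟩ := aux_exists_root_norm_le Q (by rw [hQ1]; exact pow_ne_zero _ hc10)
  have hβζ : (φ (T ^ N)).eval β = ζ := by
    have := hβroot
    rw [hQdef] at this
    simpa [sub_eq_zero] using this
  have hβr : ‖β‖ ≤ r := by
    refine le_trans ?_ hζr
    rw [hQ0, hQ1, norm_neg, norm_pow] at hβle
    exact hβle
  -- β lies in the disk, hence in the filled Julia set
  obtain ⟨B, hB⟩ := hsub hβr
  -- but the orbit of β escapes
  have horbit : ∀ k : ℕ, M * 2 ^ k ≤ ‖(φ (T ^ k * T ^ N)).eval β‖ := by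
    intro k
    have hz : (φ (T ^ k * T ^ N)).eval β = (φ (T ^ k)).eval ζ := by
      rw [hevalmul, hβζ]
    rw [hz]
    induction k with
    | zero =>
        simp only [pow_zero, hone, Polynomial.eval_X, mul_one]
        exact hζ.le
    | succ k ih =>
        have ihk := ih (by rw [hevalmul, hβζ])
        have hMk : M ≤ M * 2 ^ k :=
          le_mul_of_one_le_right (le_trans zero_le_one hM1) (one_le_pow₀ one_le_two)
        have hstep : (φ (T ^ (k + 1))).eval ζ = (φ T).eval ((φ (T ^ k)).eval ζ) := by
          rw [pow_succ, mul_comm, hevalmul]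
        rw [hstep]
        have h2 : 2 * ‖(φ (T ^ k)).eval ζ‖ ≤ ‖(φ T).eval ((φ (T ^ k)).eval ζ)‖ :=
          hesc _ (le_trans hMk ihk)
        calc M * 2 ^ (k + 1) = 2 * (M * 2 ^ k) := by ring
          _ ≤ 2 * ‖(φ (T ^ k)).eval ζ‖ := by linarith
          _ ≤ _ := h2
  obtain ⟨k, hk⟩ := pow_unbounded_of_one_lt B (one_lt_two (α := ℝ))
  have h1 : B < M * 2 ^ k := by
    have : (2:ℝ) ^ k ≤ M * 2 ^ k :=
      le_mul_of_one_le_left (by positivity) hM1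
    linarith
  exact absurd (hB (T ^ k * T ^ N)) (by push_neg; exact lt_of_lt_of_le h1 (horbit k))
end

section
/- Let F be a number field and E/F a semistable elliptic curve with minimal discriminant Δ_E and conductor f_E, and Szpiro ratio σ = log|Norm_{F/Q} Δ_E| / log|Norm_{F/Q} f_E|. Fix n ≥ 1 and let 𝔞 = (n!) ⊆ ℤ. Define S_E(𝔞) as the set of finite places v where 𝔞 does not annihilate the component group E(F_v)/E^0(F_v), and μ(E, 0, 𝔞) = (Σ_{v ∉ S_E(𝔞)} [F_v:ℚ_v] log⁺|j_E|_v) / (Σ_{v finite} [F_v:ℚ_v] log⁺|j_E|_v). Then μ(E, 0, 𝔞) ≥ (1 − σ/n) / (σ(1 − 1/n)). -/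
/-- Hindry–Silverman: let `E/F` be a semistable elliptic curve
with Szpiro ratio `σ`.  Model the (finitely many) places of bad reduction by a
finite type `V`, with `d v = [F_v : ℚ_v]·deg(v) > 0` and `ord v > 0` the order
of the (cyclic) component group `E(F_v)/E⁰(F_v)`, so that
`log|Norm Δ_E| = Σ_v d v · ord v` and the Szpiro relation reads
`Σ_v d v · ord v = σ · Σ_v d v` (semistability: `v(f_E) = 1` at bad places).
For `𝔞 = (n!)`, the ideal `𝔞` annihilates the component group at `v` iff
`ord v ∣ n!`, and `μ(E, 0, 𝔞)`, the proportion of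
`Σ_v [F_v:ℚ_v] log⁺|j_E|_v` coming from places where `𝔞` annihilates the
component group, satisfies `μ(E, 0, 𝔞) ≥ (1 − σ/n)/(σ(1 − 1/n))`. -/
theorem szpiro_component_group_proportion
    {V : Type*} [Fintype V]
    (d : V → ℝ) (hd : ∀ v, 0 < d v)
    (ord : V → ℕ) (hord : ∀ v, 0 < ord v)
    (n : ℕ) (hn : 1 ≤ n) (σ : ℝ) (hσ : 0 < σ)
    (hszpiro : ∑ v, d v * (ord v : ℝ) = σ * ∑ v, d v)
    (hpos : 0 < ∑ v, d v * (ord v : ℝ)) :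
    (1 - σ / (n : ℝ)) / (σ * (1 - 1 / (n : ℝ))) ≤
      (∑ v ∈ Finset.univ.filter (fun v => ord v ∣ Nat.factorial n), d v * (ord v : ℝ)) /
        (∑ v, d v * (ord v : ℝ)) := by
  set S1 := Finset.univ.filter (fun v => ord v ∣ Nat.factorial n) with hS1def
  set S2 := Finset.univ.filter (fun v => ¬ ord v ∣ Nat.factorial n) with hS2def
  have hSnonneg : (0:ℝ) ≤ ∑ v ∈ S1, d v * (ord v : ℝ) := by
    apply Finset.sum_nonneg
    intro v _
    exact mul_nonneg (hd v).le (Nat.cast_nonneg _)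
  rcases eq_or_lt_of_le hn with h1 | h2
  · -- n = 1 : RHS denominator is 0, so LHS = 0
    have : (n : ℝ) = 1 := by exact_mod_cast h1.symm
    rw [this]
    simp only [div_one, sub_self, mul_zero, div_zero]
    exact div_nonneg hSnonneg hpos.le
  · -- n ≥ 2
    have hn2 : (2:ℝ) ≤ (n:ℝ) := by exact_mod_cast h2
    have hnpos : (0:ℝ) < (n:ℝ) := by linarith
    have hfrac : (0:ℝ) < 1 - 1 / (n:ℝ) := by
      have : 1 / (n:ℝ) ≤ 1 / 2 := by
        apply one_div_le_one_div_of_le <;> linarith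
      linarith
    have hden : (0:ℝ) < σ * (1 - 1 / (n:ℝ)) := mul_pos hσ hfrac
    -- split sums
    have hsplitord : ∑ v, d v * (ord v : ℝ)
        = ∑ v ∈ S1, d v * (ord v : ℝ) + ∑ v ∈ S2, d v * (ord v : ℝ) :=
      (Finset.sum_filter_add_sum_filter_not _ _ _).symm
    have hsplitd : ∑ v, d v = ∑ v ∈ S1, d v + ∑ v ∈ S2, d v :=
      (Finset.sum_filter_add_sum_filter_not _ _ _).symm
    have hA : ∑ v ∈ S1, d v ≤ ∑ v ∈ S1, d v * (ord v : ℝ) := by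
      apply Finset.sum_le_sum
      intro v _
      have h1 : (1:ℝ) ≤ (ord v : ℝ) := by exact_mod_cast hord v
      nlinarith [hd v]
    have hB : (n:ℝ) * ∑ v ∈ S2, d v ≤ ∑ v ∈ S2, d v * (ord v : ℝ) := by
      rw [Finset.mul_sum]
      apply Finset.sum_le_sum
      intro v hv
      have hvmem : ¬ ord v ∣ Nat.factorial n := by
        simpa [hS2def] using hv
      have hgt : n < ord v := by
        by_contra hle
        exact hvmem (Nat.dvd_factorial (hord v) (le_of_not_gt hle))
      have hgt' : (n:ℝ) ≤ (ord v : ℝ) := by exact_mod_cast hgt.le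
      nlinarith [hd v]
    rw [div_le_div_iff₀ hden hpos]
    -- key: (n - σ) * T ≤ σ * (n - 1) * S1sum
    set S := ∑ v ∈ S1, d v * (ord v : ℝ)
    set T := ∑ v, d v * (ord v : ℝ)
    have hcomb : (n:ℝ) * ∑ v, d v ≤ (n:ℝ) * S + (T - S) := by
      have h1 := mul_le_mul_of_nonneg_left hA hnpos.le
      nlinarith [hB, hsplitd, hsplitord]
    have h3 : σ * ((n:ℝ) * ∑ v, d v) ≤ σ * ((n:ℝ) * S + (T - S)) :=
      mul_le_mul_of_nonneg_left hcomb hσ.le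
    have h4 : σ * ((n:ℝ) * ∑ v, d v) = (n:ℝ) * T := by rw [hszpiro]; ring
    have hkey : ((n:ℝ) - σ) * T ≤ σ * ((n:ℝ) - 1) * S := by nlinarith [h3, h4]
    have h5 : ((n:ℝ) - σ) * T / (n:ℝ) ≤ σ * ((n:ℝ) - 1) * S / (n:ℝ) := by
      gcongr
    have e1 : (1 - σ / (n:ℝ)) * T = ((n:ℝ) - σ) * T / (n:ℝ) := by
      field_simp
    have e2 : S * (σ * (1 - 1 / (n:ℝ))) = σ * ((n:ℝ) - 1) * S / (n:ℝ) := by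
      field_simp
    rw [e1, e2]; exact h5
end
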